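/- For a prime integer p, the period knot (p,p)-mosaics are partitioned as follows: D_P^{(p,p)} = d_{p²} + d_{1,p} + Σ_{k=0}^{p−1} d_{p_{(k,1)}} + 7, where 7 = d_{1,1} is the number of (1,1)-f.period knot (p,p)-mosaics; in particular the classes of (1,1)-f.period, (1,p)-f.period and p_{(k,1)}-f.period mosaics (k = 0,…,p−1) are pairwise disjoint. -/

import Mathlib

/-- Connection point on the left edge, for each of the eleven mosaic tiles `T_0, …, T_10`. -/
def cpL : Fin 11 → Bool := ![false, true, false, false, true, true, false, true, true, true, true]
/-- Connection point on the right edge. -/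
def cpR : Fin 11 → Bool := ![false, false, true, true, false, true, false, true, true, true, true]
/-- Connection point on the top edge. -/
def cpT : Fin 11 → Bool := ![false, false, false, true, true, false, true, true, true, true, true]
/-- Connection point on the bottom edge. -/
def cpB : Fin 11 → Bool := ![false, true, true, false, false, false, true, true, true, true, true]

/-- An `(m,n)`-mosaic: an `m × n` matrix of mosaic tiles (row `i`, column `j`). -/
abbrev Mosaic (m n : ℕ) := Fin m → Fin n → Fin 11

/-- Suitably connected: contiguous tiles agree about connection points on their common edge. -/
def SuitablyConnected {m n : ℕ} (M : Mosaic m n) : Prop :=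
  (∀ (i : Fin m) (j : Fin n) (h : j.val + 1 < n),
      cpR (M i j) = cpL (M i ⟨j.val + 1, h⟩)) ∧
  (∀ (i : Fin m) (h : i.val + 1 < m) (j : Fin n),
      cpB (M i j) = cpT (M ⟨i.val + 1, h⟩ j))

/-- Suitably ∂-connected: tiles on opposite ends of a row (resp. column) agree about
connection points on the outer boundary edges. -/
def SuitablyBdryConnected {m n : ℕ} (M : Mosaic m n) : Prop :=
  (∀ (i : Fin m) (j j' : Fin n), j.val = 0 → j'.val = n - 1 →
      cpL (M i j) = cpR (M i j')) ∧
  (∀ (i i' : Fin m) (j : Fin n), i.val = 0 → i'.val = m - 1 →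
      cpT (M i j) = cpB (M i' j))

/-- A period knot `(m,n)`-mosaic. -/
def PeriodKnot {m n : ℕ} (M : Mosaic m n) : Prop :=
  SuitablyConnected M ∧ SuitablyBdryConnected M

/-- `D_P^{(m,n)}`, the number of period knot `(m,n)`-mosaics. -/
noncomputable def DP (m n : ℕ) : ℕ := Nat.card {M : Mosaic m n // PeriodKnot M}

/-- No connection points on the boundary of the mosaic. -/
def BoundaryFree {m n : ℕ} (M : Mosaic m n) : Prop :=
  ∀ (i : Fin m) (j : Fin n),
    (j.val = 0 → cpL (M i j) = false) ∧ (j.val = n - 1 → cpR (M i j) = false) ∧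
    (i.val = 0 → cpT (M i j) = false) ∧ (i.val = m - 1 → cpB (M i j) = false)

/-- `D^{(m,n)}`, the number of knot `(m,n)`-mosaics. -/
noncomputable def DK (m n : ℕ) : ℕ :=
  Nat.card {M : Mosaic m n // SuitablyConnected M ∧ BoundaryFree M}

/-- Subtract `x` from the index `i`, modulo `m`. -/
def shiftIdx {m : ℕ} (x : ℤ) (i : Fin m) : Fin m :=
  ⟨(((i : ℤ) - x) % (m : ℤ)).toNat, by
    have hm : (0 : ℤ) < (m : ℤ) := by exact_mod_cast i.pos
    have h1 := Int.emod_lt_of_pos ((i : ℤ) - x) hm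
    have h2 := Int.emod_nonneg ((i : ℤ) - x) (by omega : (m : ℤ) ≠ 0)
    omega⟩

/-- The cyclic rotation `t_{x,y}`: `(t_{x,y} M)_{i,j} = M_{i-x, j-y}` (indices mod `m`, `n`). -/
def tshift {m n : ℕ} (x y : ℤ) (M : Mosaic m n) : Mosaic m n :=
  fun i j => M (shiftIdx x i) (shiftIdx y j)

/-- `M` is a `(p,q)`-f.period mosaic: `p` is the least positive integer with `M = t_{p,0}(M)`
and `q` is the least positive integer with `M = t_{0,q}(M)`. -/
def IsFPeriod {m n : ℕ} (p q : ℕ) (M : Mosaic m n) : Prop :=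
  IsLeast {a : ℕ | 0 < a ∧ M = tshift (a : ℤ) 0 M} p ∧
  IsLeast {b : ℕ | 0 < b ∧ M = tshift 0 (b : ℤ) M} q

/-- `d_{p,q}`: the number of `(p,q)`-f.period knot `(m,n)`-mosaics. -/
noncomputable def dFP (m n p q : ℕ) : ℕ :=
  Nat.card {M : Mosaic m n // PeriodKnot M ∧ IsFPeriod p q M}

/-- Equivalence of period knot mosaics under cyclic rotations of rows and columns. -/
def torRel (m n : ℕ) (A B : {M : Mosaic m n // PeriodKnot M}) : Prop :=
  ∃ x y : ℤ, tshift x y A.val = B.val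

/-- `D_T^{(m,n)}`, the number of toroidal knot `(m,n)`-mosaics. -/
noncomputable def DT (m n : ℕ) : ℕ := Nat.card (Quot (torRel m n))

/-- `M` is a `p_{(k,1)}`-f.period knot `(p,p)`-mosaic: not `(1,1)`-f.period and `M = t_{k,1}(M)`. -/
def IsPk1FPeriod {p : ℕ} (k : ℕ) (M : Mosaic p p) : Prop :=
  ¬ IsFPeriod 1 1 M ∧ M = tshift (k : ℤ) 1 M

/-- `d_{p_{(k,1)}}`: the number of `p_{(k,1)}`-f.period knot `(p,p)`-mosaics. -/
noncomputable def dPk (p k : ℕ) : ℕ :=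
  Nat.card {M : Mosaic p p // PeriodKnot M ∧ IsPk1FPeriod k M}

/-- `d_{p²}`: the number of period knot `(p,p)`-mosaics that are not `(1,1)`-, not `(1,p)`-
and not `p_{(k,1)}`-f.period for any `k`. -/
noncomputable def dPsq (p : ℕ) : ℕ :=
  Nat.card {M : Mosaic p p // PeriodKnot M ∧ ¬ IsFPeriod 1 1 M ∧ ¬ IsFPeriod 1 p M ∧
    ∀ k < p, ¬ IsPk1FPeriod k M}

/-- Entries of the pair `(X_k, O_k)` of `2^k × 2^k` matrices defined by the block recursion
`X_{k+1} = [[X_k, O_k], [O_k, X_k]]`, `O_{k+1} = [[O_k, X_k], [X_k, 4 O_k]]`,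
seeded with `X_0 = O_0 = [1]` (the most significant bit selects the block). -/
def matsXO : ℕ → ℕ → ℕ → ℕ × ℕ
  | 0, _, _ => (1, 1)
  | k + 1, i, j =>
    let v := matsXO k (i % 2 ^ k) (j % 2 ^ k)
    if i / 2 ^ k % 2 = 0 then
      if j / 2 ^ k % 2 = 0 then (v.1, v.2) else (v.2, v.1)
    else
      if j / 2 ^ k % 2 = 0 then (v.2, v.1) else (v.1, 4 * v.2)

/-- The matrix `X_k`. -/
def Xmat (m : ℕ) : Matrix (Fin (2 ^ m)) (Fin (2 ^ m)) ℕ :=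
  Matrix.of fun i j => (matsXO m i j).1

/-- The matrix `O_k`. -/
def Omat (m : ℕ) : Matrix (Fin (2 ^ m)) (Fin (2 ^ m)) ℕ :=
  Matrix.of fun i j => (matsXO m i j).2

/-- Entries of the quadruple `(X_k^+, X_k^-, O_k^+, O_k^-)` of `2^k × 2^k` matrices defined by
the block recursions `X_{k+1}^+ = [[X_k^+, O_k^-],[O_k^-, X_k^+]]`,
`X_{k+1}^- = [[X_k^-, O_k^+],[O_k^+, X_k^-]]`, `O_{k+1}^+ = [[O_k^+, X_k^-],[X_k^-, 4 O_k^+]]`,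
`O_{k+1}^- = [[O_k^-, X_k^+],[X_k^+, 4 O_k^-]]`, seeded with `X_0^+ = O_0^+ = [1]`,
`X_0^- = O_0^- = [0]` (the most significant bit selects the block). -/
def matsPM : ℕ → ℕ → ℕ → ℕ × ℕ × ℕ × ℕ
  | 0, _, _ => (1, 0, 1, 0)
  | k + 1, i, j =>
    let v := matsPM k (i % 2 ^ k) (j % 2 ^ k)
    match v with
    | (xp, xm, op, om) =>
      if i / 2 ^ k % 2 = 0 then
        if j / 2 ^ k % 2 = 0 then (xp, xm, op, om) else (om, op, xm, xp)
      else
        if j / 2 ^ k % 2 = 0 then (om, op, xm, xp) else (xp, xm, 4 * op, 4 * om)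

/-- The matrix `X_m^+`. -/
def Xplus (m : ℕ) : Matrix (Fin (2 ^ m)) (Fin (2 ^ m)) ℕ :=
  Matrix.of fun i j => (matsPM m i j).1
/-- The matrix `X_m^-`. -/
def Xminus (m : ℕ) : Matrix (Fin (2 ^ m)) (Fin (2 ^ m)) ℕ :=
  Matrix.of fun i j => (matsPM m i j).2.1
/-- The matrix `O_m^+`. -/
def Oplus (m : ℕ) : Matrix (Fin (2 ^ m)) (Fin (2 ^ m)) ℕ :=
  Matrix.of fun i j => (matsPM m i j).2.2.1
/-- The matrix `O_m^-`. -/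
def Ominus (m : ℕ) : Matrix (Fin (2 ^ m)) (Fin (2 ^ m)) ℕ :=
  Matrix.of fun i j => (matsPM m i j).2.2.2

/-- The boundary state (a word in `{o,x}^m`) encoded by `a : Fin (2^m)` in reverse
lexicographic order: the first position is the least significant bit. -/
def stateOf {m : ℕ} (a : Fin (2 ^ m)) : Fin m → Bool := fun r => (a : ℕ).testBit r.val

/-- The `l`-state of a mosaic. -/
def lState {m n : ℕ} (hn : 0 < n) (M : Mosaic m n) : Fin m → Bool :=
  fun i => cpL (M i ⟨0, hn⟩)
/-- The `r`-state of a mosaic. -/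
def rState {m n : ℕ} (hn : 0 < n) (M : Mosaic m n) : Fin m → Bool :=
  fun i => cpR (M i ⟨n - 1, Nat.sub_lt hn Nat.one_pos⟩)
/-- The `t`-state of a mosaic. -/
def tState {m n : ℕ} (hm : 0 < m) (M : Mosaic m n) : Fin n → Bool :=
  fun j => cpT (M ⟨0, hm⟩ j)
/-- The `b`-state of a mosaic. -/
def bState {m n : ℕ} (hm : 0 < m) (M : Mosaic m n) : Fin n → Bool :=
  fun j => cpB (M ⟨m - 1, Nat.sub_lt hm Nat.one_pos⟩ j)

/-- The state matrix `N^{(m,n)+}`: its `(a,b)` entry counts the suitably connected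
`(m,n)`-mosaics whose `t`-state equals its `b`-state, whose `l`-state is the `a`-th state
and whose `r`-state is the `b`-th state. -/
noncomputable def Nplus (m n : ℕ) (hm : 0 < m) (hn : 0 < n) :
    Matrix (Fin (2 ^ m)) (Fin (2 ^ m)) ℕ :=
  Matrix.of fun a b => Nat.card {M : Mosaic m n // SuitablyConnected M ∧
    tState hm M = bState hm M ∧ lState hn M = stateOf a ∧ rState hn M = stateOf b}

/-- The index map `α` for `tr^{(k)}`: cyclic shift by `k` positions of the `p`-bit binary
representation, i.e. `α(i) ≡ 2^k i (mod 2^p - 1)` for `0 < i < 2^p - 1`, `α(0) = 0`,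
`α(2^p-1) = 2^p-1`. -/
def alphaIdx (p k : ℕ) (i : Fin (2 ^ p)) : Fin (2 ^ p) :=
  if h : (i : ℕ) = 2 ^ p - 1 then i
  else ⟨(2 ^ k * (i : ℕ)) % (2 ^ p - 1), by
    have h1 : 0 < 2 ^ p := Nat.two_pow_pos p
    have h2 : (i : ℕ) < 2 ^ p := i.isLt
    have h3 : 0 < 2 ^ p - 1 := by omega
    have h4 := Nat.mod_lt (2 ^ k * (i : ℕ)) h3
    omega⟩

/-- The twisted trace `tr^{(k)}(A) = Σ_i A_{i+1, α(i)+1}`. -/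
def trk (p k : ℕ) (A : Matrix (Fin (2 ^ p)) (Fin (2 ^ p)) ℕ) : ℕ :=
  ∑ i, A i (alphaIdx p k i)

/-!
The rotations `(x, y)` with `t_{x,y}(M) = M` form a subgroup of `ℤ × ℤ` containing `(p, 0)`.
For prime `p`, a row rotation `(d, 0)` with `p ∤ d` therefore generates `(1, 0)`. Two distinct
`p_{(k,1)}`-periods `k, l` give the row rotation `(k - l, 0)`, and a `(1, q)`-f.period mosaic has
`(1, 0)` outright; in either case `(k, 1)` then yields `(0, 1)`, so `M` is `(1,1)`-f.period, i.e.
constant. This makes the classes disjoint, and a constant mosaic is a period knot mosaic iff its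
tile has `L = R` and `T = B`: seven of the eleven tiles.
-/

section Shift

variable {m n : ℕ}

lemma shiftIdx_zero (i : Fin m) : shiftIdx 0 i = i := by
  have := i.isLt
  ext
  simp [shiftIdx, Int.emod_eq_of_lt (by omega : (0 : ℤ) ≤ i) (by omega : (i : ℤ) < m)]

lemma shiftIdx_shiftIdx (x x' : ℤ) (i : Fin m) :
    shiftIdx x' (shiftIdx x i) = shiftIdx (x + x') i := by
  have hm : (m : ℤ) ≠ 0 := by exact_mod_cast i.pos.ne'
  ext
  simp only [shiftIdx, Int.toNat_of_nonneg (Int.emod_nonneg _ hm), Int.emod_sub_emod, sub_sub]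

lemma shiftIdx_natCast_self (i : Fin m) : shiftIdx (m : ℤ) i = i := by
  conv_rhs => rw [← shiftIdx_zero i]
  ext
  simp only [shiftIdx, Int.sub_emod_right, sub_zero]

lemma shiftIdx_val_self [NeZero m] (i : Fin m) : shiftIdx (i : ℤ) i = 0 := by
  ext
  simp [shiftIdx]

lemma tshift_zero (M : Mosaic m n) : tshift 0 0 M = M := by
  funext i j
  simp [tshift, shiftIdx_zero]

lemma tshift_tshift (x y x' y' : ℤ) (M : Mosaic m n) :
    tshift x' y' (tshift x y M) = tshift (x + x') (y + y') M := by
  funext i j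
  simp only [tshift, shiftIdx_shiftIdx, add_comm x', add_comm y']

end Shift

section PeriodLattice

variable {m n : ℕ}

def periodLattice (M : Mosaic m n) : AddSubgroup (ℤ × ℤ) where
  carrier := {v | M = tshift v.1 v.2 M}
  zero_mem' := (tshift_zero M).symm
  add_mem' := by
    rintro ⟨x, y⟩ ⟨x', y'⟩ (h : M = tshift x y M) (h' : M = tshift x' y' M)
    change M = tshift (x + x') (y + y') M
    rw [← tshift_tshift, ← h, ← h']
  neg_mem' := by
    rintro ⟨x, y⟩ (h : M = tshift x y M)
    change M = tshift (-x) (-y) M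
    rw [h, tshift_tshift, ← h, add_neg_cancel, add_neg_cancel, tshift_zero]

lemma mem_periodLattice {M : Mosaic m n} {v : ℤ × ℤ} :
    v ∈ periodLattice M ↔ M = tshift v.1 v.2 M :=
  Iff.rfl

lemma natCast_zero_mem_periodLattice (M : Mosaic m n) : ((m : ℤ), 0) ∈ periodLattice M := by
  funext i j
  simp [tshift, shiftIdx_natCast_self, shiftIdx_zero]

lemma one_zero_mem_periodLattice_of_isCoprime {M : Mosaic m n} {d : ℤ} (hd : IsCoprime d m)
    (h : (d, 0) ∈ periodLattice M) : (1, 0) ∈ periodLattice M := by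
  obtain ⟨u, v, huv⟩ := hd
  have hcomb : ((1 : ℤ), (0 : ℤ)) = u • (d, 0) + v • ((m : ℤ), 0) := by simp [huv]
  rw [hcomb]
  exact add_mem (zsmul_mem h u) (zsmul_mem (natCast_zero_mem_periodLattice M) v)

lemma isFPeriod_one_one_iff {M : Mosaic m n} :
    IsFPeriod 1 1 M ↔ (1, 0) ∈ periodLattice M ∧ (0, 1) ∈ periodLattice M := by
  simp only [mem_periodLattice]
  constructor
  · rintro ⟨⟨⟨-, h10⟩, -⟩, ⟨⟨-, h01⟩, -⟩⟩
    exact ⟨by simpa using h10, by simpa using h01⟩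
  · rintro ⟨h10, h01⟩
    exact ⟨⟨⟨one_pos, by simpa using h10⟩, fun a ha => ha.1⟩,
      ⟨⟨one_pos, by simpa using h01⟩, fun b hb => hb.1⟩⟩

lemma IsFPeriod.unique {M : Mosaic m n} {p q p' q' : ℕ} (h : IsFPeriod p q M)
    (h' : IsFPeriod p' q' M) : p = p' ∧ q = q' :=
  ⟨h.1.unique h'.1, h.2.unique h'.2⟩

lemma IsFPeriod.one_zero_mem {M : Mosaic m n} {q : ℕ} (h : IsFPeriod 1 q M) :
    (1, 0) ∈ periodLattice M := by
  simpa [mem_periodLattice] using h.1.1.2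

lemma isFPeriod_one_one_of_mem {M : Mosaic m n} {k : ℤ} (h10 : (1, 0) ∈ periodLattice M)
    (hk1 : (k, 1) ∈ periodLattice M) : IsFPeriod 1 1 M := by
  have h01 : ((0 : ℤ), (1 : ℤ)) = (k, 1) - k • (1, 0) := by simp
  rw [isFPeriod_one_one_iff, h01]
  exact ⟨h10, sub_mem hk1 (zsmul_mem h10 k)⟩

lemma eq_const_of_isFPeriod_one_one [NeZero m] [NeZero n] {M : Mosaic m n}
    (h : IsFPeriod 1 1 M) : M = fun _ _ => M 0 0 := by
  obtain ⟨h10, h01⟩ := isFPeriod_one_one_iff.mp h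
  funext i j
  have hij : ((i : ℤ), (j : ℤ)) ∈ periodLattice M := by
    have : ((i : ℤ), (j : ℤ)) = (i : ℤ) • (1, 0) + (j : ℤ) • (0, 1) := by simp
    rw [this]
    exact add_mem (zsmul_mem h10 _) (zsmul_mem h01 _)
  calc M i j = tshift i j M i j := congr_fun₂ (mem_periodLattice.mp hij) i j
    _ = M 0 0 := by simp only [tshift, shiftIdx_val_self]

lemma isFPeriod_one_one_const (c : Fin 11) : IsFPeriod 1 1 (fun (_ : Fin m) (_ : Fin n) => c) :=
  isFPeriod_one_one_iff.mpr ⟨rfl, rfl⟩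

end PeriodLattice

section Classes

variable {p : ℕ} {M : Mosaic p p}

lemma IsFPeriod.not_isPk1FPeriod {q : ℕ} (h : IsFPeriod 1 q M) (k : ℕ) :
    ¬ IsPk1FPeriod k M :=
  fun hk => hk.1 (isFPeriod_one_one_of_mem h.one_zero_mem hk.2)

lemma IsPk1FPeriod.eq_of_prime (hP : p.Prime) {k l : ℕ} (hk : k < p) (hl : l < p)
    (hMk : IsPk1FPeriod k M) (hMl : IsPk1FPeriod l M) : k = l := by
  by_contra hkl
  have hk1 : ((k : ℤ), (1 : ℤ)) ∈ periodLattice M := hMk.2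
  have hl1 : ((l : ℤ), (1 : ℤ)) ∈ periodLattice M := hMl.2
  have hdiff : ((k : ℤ) - l, (0 : ℤ)) ∈ periodLattice M := by simpa using sub_mem hk1 hl1
  have hndvd : ¬ (p : ℤ) ∣ (k : ℤ) - l := by
    intro hdvd
    have habs : |(k : ℤ) - l| < p := by rw [abs_lt]; omega
    have := Int.eq_zero_of_abs_lt_dvd hdvd habs
    omega
  have hcop : IsCoprime ((k : ℤ) - l) p :=
    ((Nat.prime_iff_prime_int.mp hP).coprime_iff_not_dvd.mpr hndvd).symm
  exact hMk.1 (isFPeriod_one_one_of_mem (one_zero_mem_periodLattice_of_isCoprime hcop hdiff) hk1)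

end Classes

section ConstantMosaics

variable {m n : ℕ} [NeZero m] [NeZero n]

lemma periodKnot_const_iff (c : Fin 11) :
    PeriodKnot (fun (_ : Fin m) (_ : Fin n) => c) ↔ cpL c = cpR c ∧ cpT c = cpB c := by
  constructor
  · rintro ⟨-, hrow, hcol⟩
    exact ⟨hrow 0 0 ⟨n - 1, Nat.sub_one_lt (NeZero.ne n)⟩ rfl rfl,
      hcol 0 ⟨m - 1, Nat.sub_one_lt (NeZero.ne m)⟩ 0 rfl rfl⟩
  · rintro ⟨hLR, hTB⟩
    exact ⟨⟨fun _ _ _ => hLR.symm, fun _ _ _ => hTB.symm⟩,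
      ⟨fun _ _ _ _ _ => hLR, fun _ _ _ _ _ => hTB⟩⟩

def periodKnotFPeriodOneOneEquiv :
    {M : Mosaic m n // PeriodKnot M ∧ IsFPeriod 1 1 M} ≃
      {c : Fin 11 // cpL c = cpR c ∧ cpT c = cpB c} where
  toFun M := ⟨M.1 0 0, (periodKnot_const_iff _).mp
    (eq_const_of_isFPeriod_one_one M.2.2 ▸ M.2.1)⟩
  invFun c := ⟨fun _ _ => c.1, (periodKnot_const_iff c.1).mpr c.2, isFPeriod_one_one_const c.1⟩
  left_inv M := Subtype.ext (eq_const_of_isFPeriod_one_one M.2.2).symm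
  right_inv _ := rfl

lemma dFP_one_one : dFP m n 1 1 = 7 := by
  rw [dFP, Nat.card_congr periodKnotFPeriodOneOneEquiv, Nat.card_eq_fintype_card]
  decide

end ConstantMosaics

lemma Finset.sum_range_boole_eq_ite_exists {Q : ℕ → Prop} [DecidablePred Q] {p : ℕ}
    (hQ : ∀ k < p, ∀ l < p, Q k → Q l → k = l) :
    ∑ k ∈ Finset.range p, (if Q k then 1 else 0) = if ∃ k < p, Q k then 1 else 0 := by
  split_ifs with hex
  · obtain ⟨k, hk, hQk⟩ := hex
    rw [Finset.sum_eq_single_of_mem k (Finset.mem_range.mpr hk) fun l hl hlk =>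
      if_neg fun hQl => hlk (hQ l (Finset.mem_range.mp hl) k hk hQl hQk)]
    exact if_pos hQk
  · exact Finset.sum_eq_zero fun k hk => if_neg fun hQk => hex ⟨k, Finset.mem_range.mp hk, hQk⟩

theorem Nat.card_subtype_eq_rest_add_classes {α : Type*} [Finite α] (P A B : α → Prop)
    (C : ℕ → α → Prop) (p : ℕ) (hAB : ∀ x, P x → A x → ¬ B x)
    (hAC : ∀ x, P x → ∀ k < p, A x → ¬ C k x) (hBC : ∀ x, P x → ∀ k < p, B x → ¬ C k x)
    (hCC : ∀ x, P x → ∀ k < p, ∀ l < p, C k x → C l x → k = l) :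
    Nat.card {x // P x} = Nat.card {x // P x ∧ ¬ A x ∧ ¬ B x ∧ ∀ k < p, ¬ C k x} +
      Nat.card {x // P x ∧ B x} + ∑ k ∈ Finset.range p, Nat.card {x // P x ∧ C k x} +
      Nat.card {x // P x ∧ A x} := by
  classical
  have := Fintype.ofFinite α
  simp only [Nat.card_eq_fintype_card, Fintype.card_subtype, Finset.card_filter]
  rw [Finset.sum_comm, ← Finset.sum_add_distrib, ← Finset.sum_add_distrib,
    ← Finset.sum_add_distrib]
  refine Finset.sum_congr rfl fun x _ => ?_
  by_cases hP : P x
  swap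
  · simp [hP]
  simp only [hP, true_and, Finset.sum_range_boole_eq_ite_exists (hCC x hP)]
  by_cases hA : A x
  · have hC : ¬ ∃ k < p, C k x := fun ⟨k, hk, hCk⟩ => hAC x hP k hk hA hCk
    simp [hA, hAB x hP hA, hC]
  by_cases hB : B x
  · have hC : ¬ ∃ k < p, C k x := fun ⟨k, hk, hCk⟩ => hBC x hP k hk hB hCk
    simp [hA, hB, hC]
  by_cases hC : ∃ k < p, C k x <;> simp [hA, hB, hC]

/-- For a prime `p`, the period knot `(p,p)`-mosaics are partitioned:
`D_P^{(p,p)} = d_{p²} + d_{1,p} + Σ_{k=0}^{p-1} d_{p_{(k,1)}} + 7`, where `7 = d_{1,1}`;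
in particular the classes of `(1,1)`-, `(1,p)`- and `p_{(k,1)}`-f.period mosaics are
pairwise disjoint. -/
theorem period_prime_square_partition (p : ℕ) (hP : p.Prime) :
    DP p p = dPsq p + dFP p p 1 p + (∑ k ∈ Finset.range p, dPk p k) + 7 ∧
    dFP p p 1 1 = 7 ∧
    ∀ M : Mosaic p p, PeriodKnot M →
      (¬ (IsFPeriod 1 1 M ∧ IsFPeriod 1 p M)) ∧
      (∀ k < p, ¬ (IsFPeriod 1 1 M ∧ IsPk1FPeriod k M)) ∧
      (∀ k < p, ¬ (IsFPeriod 1 p M ∧ IsPk1FPeriod k M)) ∧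
      (∀ k l : ℕ, k < p → l < p → k ≠ l → ¬ (IsPk1FPeriod k M ∧ IsPk1FPeriod l M)) := by
  have : NeZero p := ⟨hP.ne_zero⟩
  have h11_1p (M : Mosaic p p) : ¬ (IsFPeriod 1 1 M ∧ IsFPeriod 1 p M) :=
    fun ⟨h11, h1p⟩ => hP.one_lt.ne (h11.unique h1p).2
  have h1p_pk (M : Mosaic p p) (k : ℕ) : ¬ (IsFPeriod 1 p M ∧ IsPk1FPeriod k M) :=
    fun ⟨h1p, hk⟩ => h1p.not_isPk1FPeriod k hk
  refine ⟨?_, dFP_one_one, fun M _ => ⟨h11_1p M, fun k _ h => h.2.1 h.1,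
    fun k _ => h1p_pk M k, fun k l hk hl hkl h => hkl (h.1.eq_of_prime hP hk hl h.2)⟩⟩
  rw [← dFP_one_one (m := p) (n := p)]
  exact Nat.card_subtype_eq_rest_add_classes _ _ _ _ p (fun M _ h11 h1p => h11_1p M ⟨h11, h1p⟩)
    (fun _ _ _ _ h11 hk => hk.1 h11) (fun M _ k _ h1p hk => h1p_pk M k ⟨h1p, hk⟩)
    (fun _ _ _ hk _ hl hMk hMl => hMk.eq_of_prime hP hk hl hMl)
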